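/- Matrices A and B with cardinal entries (indexed by V and W) are shift equivalent if and only if the C*-correspondences X(A) and X(B) are shift equivalent: i.e., there exist a lag m ≥ 1, a c₀(V)-c₀(W) correspondence R and a c₀(W)-c₀(V) correspondence S with unitary isomorphisms X(A)^⊗m ≅ R ⊗ S, X(B)^⊗m ≅ S ⊗ R, S ⊗ X(A) ≅ X(B) ⊗ S, X(A) ⊗ R ≅ R ⊗ X(B). -/

import Mathlib

open TensorProduct

/-- A bundled finite-dimensional complex vector space (modelling, up to unitary
isomorphism, one compression `p_v E p_w` of a correspondence between `c₀`
algebras of finite sets). -/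
structure FdVec : Type 1 where
  carrier : Type
  [acg : AddCommGroup carrier]
  [mod : Module ℂ carrier]
  [fd : FiniteDimensional ℂ carrier]

attribute [instance] FdVec.acg FdVec.mod FdVec.fd

/-- A correspondence from `c₀(V)` to `c₀(W)` modelled as the family of its
compressions; the interior tensor product of correspondences is given by
`(X ⊗ Y) v u = ⨁_w (X v w) ⊗ (Y w u)`. -/
noncomputable def hmul {V W U : Type} [Fintype W] (X : V → W → FdVec)
    (Y : W → U → FdVec) : V → U → FdVec :=
  fun v u => ⟨Π w : W, (X v w).carrier ⊗[ℂ] (Y w u).carrier⟩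

/-- `hpow X k` is the `(k+1)`-fold interior tensor power `X^{⊗(k+1)}`. -/
noncomputable def hpow {V : Type} [Fintype V] (X : V → V → FdVec) : ℕ → (V → V → FdVec)
  | 0 => X
  | k + 1 => hmul X (hpow X k)

/-- Unitary isomorphism of correspondences: since the bimodule actions are by
the coordinate projections, it amounts to isomorphisms of all compressions. -/
def HIso {V W : Type} (X Y : V → W → FdVec) : Prop :=
  ∀ v w, Nonempty ((X v w).carrier ≃ₗ[ℂ] (Y v w).carrier)

/-- The correspondence `X(A)` of a matrix `A` over `ℕ`: `p_v X(A) p_w` has an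
orthonormal basis indexed by the edges from `v` to `w`. -/
noncomputable def XofMat {V W : Type} (A : Matrix V W ℕ) : V → W → FdVec :=
  fun v w => ⟨Fin (A v w) → ℂ⟩

/-!
Up to unitary isomorphism a correspondence between `c₀` algebras of finite sets is determined
by the dimensions of its compressions, i.e. by a matrix over `ℕ`; under this dictionary
`X(C)` has matrix `C` and the interior tensor product becomes the matrix product. Both kinds of
shift equivalence are therefore the same system of matrix equations.
-/

open Module

noncomputable def finrankMatrix {V W : Type} (X : V → W → FdVec) : Matrix V W ℕ :=
  Matrix.of fun v w => finrank ℂ (X v w).carrier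

@[simp]
lemma finrankMatrix_XofMat {V W : Type} (A : Matrix V W ℕ) : finrankMatrix (XofMat A) = A := by
  ext v w
  exact finrank_fin_fun ℂ

@[simp]
lemma finrankMatrix_hmul {V W U : Type} [Fintype W] (X : V → W → FdVec) (Y : W → U → FdVec) :
    finrankMatrix (hmul X Y) = finrankMatrix X * finrankMatrix Y := by
  ext v u
  exact (finrank_pi_fintype ℂ).trans
    (by simp [finrank_tensorProduct, finrankMatrix, Matrix.mul_apply])

@[simp]
lemma finrankMatrix_hpow {V : Type} [Fintype V] [DecidableEq V] (X : V → V → FdVec) (k : ℕ) :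
    finrankMatrix (hpow X k) = finrankMatrix X ^ (k + 1) := by
  induction k with
  | zero => simp [hpow]
  | succ k ih => rw [hpow, finrankMatrix_hmul, ih, ← pow_succ']

lemma hIso_iff_finrankMatrix_eq {V W : Type} (X Y : V → W → FdVec) :
    HIso X Y ↔ finrankMatrix X = finrankMatrix Y := by
  simp only [HIso, FiniteDimensional.nonempty_linearEquiv_iff_finrank_eq, ← Matrix.ext_iff]
  rfl

lemma correspondence_se_iff_finrankMatrix {V W : Type} [Fintype V] [Fintype W] [DecidableEq V]
    [DecidableEq W] (A : Matrix V V ℕ) (B : Matrix W W ℕ) (k : ℕ) (R : V → W → FdVec)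
    (S : W → V → FdVec) :
    (HIso (hpow (XofMat A) k) (hmul R S) ∧ HIso (hpow (XofMat B) k) (hmul S R) ∧
      HIso (hmul S (XofMat A)) (hmul (XofMat B) S) ∧
      HIso (hmul (XofMat A) R) (hmul R (XofMat B))) ↔
    (A ^ (k + 1) = finrankMatrix R * finrankMatrix S ∧
      B ^ (k + 1) = finrankMatrix S * finrankMatrix R ∧
      finrankMatrix S * A = B * finrankMatrix S ∧ A * finrankMatrix R = finrankMatrix R * B) := by
  simp only [hIso_iff_finrankMatrix_eq, finrankMatrix_hpow, finrankMatrix_hmul,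
    finrankMatrix_XofMat]

/-- matrices `A` and `B` are shift equivalent if and only if the
C*-correspondences `X(A)` and `X(B)` are shift equivalent, i.e. there are a lag
`m = k + 1 ≥ 1` and correspondences `R`, `S` with
`X(A)^⊗m ≅ R ⊗ S`, `X(B)^⊗m ≅ S ⊗ R`, `S ⊗ X(A) ≅ X(B) ⊗ S`,
`X(A) ⊗ R ≅ R ⊗ X(B)`. -/
theorem matrix_se_iff_correspondence_se
    {V W : Type} [Fintype V] [Fintype W] [DecidableEq V] [DecidableEq W]
    (A : Matrix V V ℕ) (B : Matrix W W ℕ) :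
    (∃ m : ℕ, 1 ≤ m ∧ ∃ (R : Matrix V W ℕ) (S : Matrix W V ℕ),
      A ^ m = R * S ∧ B ^ m = S * R ∧ S * A = B * S ∧ A * R = R * B) ↔
    (∃ (k : ℕ) (R : V → W → FdVec) (S : W → V → FdVec),
      HIso (hpow (XofMat A) k) (hmul R S) ∧
      HIso (hpow (XofMat B) k) (hmul S R) ∧
      HIso (hmul S (XofMat A)) (hmul (XofMat B) S) ∧
      HIso (hmul (XofMat A) R) (hmul R (XofMat B))) := by
  simp only [correspondence_se_iff_finrankMatrix]
  constructor
  · rintro ⟨m, hm, R, S, hse⟩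
    obtain ⟨k, rfl⟩ := Nat.exists_eq_add_of_le' hm
    exact ⟨k, XofMat R, XofMat S, by simpa using hse⟩
  · rintro ⟨k, R, S, hse⟩
    exact ⟨k + 1, k.succ_pos, finrankMatrix R, finrankMatrix S, hse⟩
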